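/- Product estimate from interpolation: for divergence-free u ∈ W^{3,2}(T³;R³) with ‖∇u‖_{W^{2,2}} ≤ C₀‖ω‖_{W^{2,2}} and ω ∈ W^{2,2}(T³;R³) ∩ L^∞, one has ‖∂_α ω · ∂_β∂_γ u‖_{L²} ≤ C (‖∇u‖_{L^∞} + ‖ω‖_{L^∞}) ‖ω‖_{W^{2,2}} for all indices α, β, γ ∈ {1,2,3}. -/

import Mathlib

open MeasureTheory

noncomputable section

abbrev V3 := Fin 3 → ℝ

/-- The cube `[0,L]^3`, a fundamental domain for the torus `T^3 = [0,L]^3`. -/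
def Q3 (L : ℝ) : Set V3 := Set.univ.pi fun _ => Set.Icc 0 L

/-- Partial derivative `∂_j g` of a scalar function on `ℝ^3`. -/
def pd (j : Fin 3) (g : V3 → ℝ) (x : V3) : ℝ := fderiv ℝ g x (Pi.single j 1)

/-- `f` is `L`-periodic in each coordinate direction (i.e. a field on the torus). -/
def Periodic3 (L : ℝ) (f : V3 → V3) : Prop :=
  ∀ (x : V3) (i : Fin 3), f (x + Pi.single i L) = f x

/-- Divergence-free vector field: `∑_j ∂_j ξ^j = 0`. -/
def DivFree (ξ : V3 → V3) : Prop := ∀ x : V3, ∑ j : Fin 3, pd j (fun y => ξ y j) x = 0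

/-- Lie derivative (Lie bracket) `L_ξ f = (ξ·∇)f − (f·∇)ξ`, componentwise. -/
def lieD (ξ f : V3 → V3) : V3 → V3 := fun x i =>
  ∑ j : Fin 3, (ξ x j * pd j (fun y => f y i) x - f x j * pd j (fun y => ξ y i) x)

/-- `L²` inner product `⟨f,g⟩ = ∫_{T³} f·g dx` over the fundamental domain. -/
def ipT (L : ℝ) (f g : V3 → V3) : ℝ := ∫ x in Q3 L, ∑ i : Fin 3, f x i * g x i

/-- Zero order (multiplication) operator `(S₂ f)_i = −∑_j (∂_i ξ^j + ∂_j ξ^i) f_j`. -/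
def S2op (ξ f : V3 → V3) : V3 → V3 := fun x i =>
  -∑ j : Fin 3, (pd i (fun y => ξ y j) x + pd j (fun y => ξ y i) x) * f x j

/-- Componentwise Laplacian. -/
def lapD (f : V3 → V3) : V3 → V3 := fun x i => ∑ j : Fin 3, pd j (pd j (fun y => f y i)) x

/-- Sup (L^∞) norm of a vector field. -/
def supN (f : V3 → V3) : ℝ := ⨆ x : V3, ‖f x‖

/-- Sup norm of the gradient. -/
def gradSup (f : V3 → V3) : ℝ := ⨆ x : V3, ‖fderiv ℝ f x‖

/-- `L²` norm over the torus. -/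
def l2N (L : ℝ) (f : V3 → V3) : ℝ := Real.sqrt (∫ x in Q3 L, ‖f x‖ ^ 2)

/-- `W^{2,2}` Sobolev norm over the torus. -/
def w22N (L : ℝ) (f : V3 → V3) : ℝ :=
  Real.sqrt (∫ x in Q3 L,
    (‖f x‖ ^ 2 + ‖fderiv ℝ f x‖ ^ 2 + ‖iteratedFDeriv ℝ 2 f x‖ ^ 2))

/-- `W^{3,2}` Sobolev norm over the torus. -/
def w32N (L : ℝ) (f : V3 → V3) : ℝ :=
  Real.sqrt (∫ x in Q3 L, ∑ k ∈ Finset.range 4, ‖iteratedFDeriv ℝ k f x‖ ^ 2)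

/-- The `W^{2,2}` norm of `∇u` (derivative part of the `W^{3,2}` norm of `u`). -/
def gw22N (L : ℝ) (u : V3 → V3) : ℝ :=
  Real.sqrt (∫ x in Q3 L,
    (‖fderiv ℝ u x‖ ^ 2 + ‖iteratedFDeriv ℝ 2 u x‖ ^ 2 + ‖iteratedFDeriv ℝ 3 u x‖ ^ 2))

/-!
With `f = ∂_α ω_i` and `g = ∂_β ∂_γ u_j`, Cauchy–Schwarz gives `‖f g‖₂² ≤ ‖f‖₄² ‖g‖₄²`. Each
`L⁴` norm comes from the interpolation inequality `‖∂F‖₄² ≤ 3 ‖F‖_∞ ‖∂²F‖₂`: write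
`∫ (∂F)⁴ = ∫ (∂F)³ ∂F`, integrate by parts over the torus (periodicity kills the boundary terms)
and apply Cauchy–Schwarz to `∫ (∂F)² |∂²F|`. With `F = ω_i` this bounds `‖f‖₄²` by
`3 ‖ω‖_∞ ‖ω‖_{W^{2,2}}`, and with `F = ∂_γ u_j` it bounds `‖g‖₄²` by
`3 ‖∇u‖_∞ ‖∇u‖_{W^{2,2}} ≤ 3 C₀ ‖∇u‖_∞ ‖ω‖_{W^{2,2}}`; finally `√(‖ω‖_∞ ‖∇u‖_∞)` is at most
`‖∇u‖_∞ + ‖ω‖_∞`.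
-/

open Function Set

section Periodic

theorem Function.Periodic.fderiv {𝕜 E F : Type*} [NontriviallyNormedField 𝕜]
    [NormedAddCommGroup E] [NormedSpace 𝕜 E] [NormedAddCommGroup F] [NormedSpace 𝕜 F]
    {f : E → F} {c : E} (h : Periodic f c) : Periodic (fderiv 𝕜 f) c := fun x => by
  rw [← fderiv_comp_add_right, show (fun y => f (y + c)) = f from funext h]

theorem periodic_pd {g : V3 → ℝ} {c : V3} (h : Periodic g c) (j : Fin 3) :
    Periodic (pd j g) c := fun x =>
  congrArg (fun T : V3 →L[ℝ] ℝ => T (Pi.single j 1)) (h.fderiv x)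

theorem Function.Periodic.finset_sum_period {α β ι : Type*} [AddCommMonoid α] {f : α → β}
    {c : ι → α} (s : Finset ι) (h : ∀ i ∈ s, Periodic f (c i)) : Periodic f (∑ i ∈ s, c i) := by
  classical
  induction s using Finset.induction_on with
  | empty => rw [Finset.sum_empty]; exact periodic_with_period_zero f
  | insert i s hi ih =>
    rw [Finset.sum_insert hi]
    exact (h i (s.mem_insert_self i)).add_period
      (ih fun j hj => h j (Finset.mem_insert_of_mem hj))

variable {ι β : Type*} [Fintype ι] [DecidableEq ι] {L : ℝ}

theorem exists_mem_pi_Icc_eq_of_periodic (hL : 0 < L) {F : (ι → ℝ) → β}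
    (hF : ∀ i, Periodic F (Pi.single i L)) (x : ι → ℝ) :
    ∃ y ∈ univ.pi fun _ => Icc 0 L, F y = F x := by
  refine ⟨x - ∑ i, toIcoDiv hL 0 (x i) • Pi.single i L, fun i _ => ?_, ?_⟩
  · have hi : (x - ∑ j, toIcoDiv hL 0 (x j) • (Pi.single j L : ι → ℝ)) i =
        toIcoMod hL 0 (x i) := by
      simp only [Pi.sub_apply, Finset.sum_apply, Pi.smul_apply, Pi.single_apply, smul_ite,
        smul_zero, Finset.sum_ite_eq, Finset.mem_univ, if_true]
      rfl
    exact hi ▸ Ico_subset_Icc_self (toIcoMod_mem_Ico' hL (x i))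
  · exact (Periodic.finset_sum_period _ fun i _ => (hF i).zsmul _).sub_eq x

theorem bddAbove_range_norm_of_periodic {E : Type*} [SeminormedAddCommGroup E] (hL : 0 < L)
    {F : (ι → ℝ) → E} (hc : Continuous F) (hF : ∀ i, Periodic F (Pi.single i L)) :
    BddAbove (range fun x => ‖F x‖) := by
  obtain ⟨M, hM⟩ := ((isCompact_univ_pi fun _ => isCompact_Icc).image hc.norm).bddAbove
  refine ⟨M, ?_⟩
  rintro _ ⟨x, rfl⟩
  obtain ⟨y, hy, hyx⟩ := exists_mem_pi_Icc_eq_of_periodic hL hF x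
  exact hM ⟨y, hy, congrArg norm hyx⟩

end Periodic

section PartialDerivatives

theorem norm_iteratedFDeriv_apply_le {𝕜 E F ι : Type*} [NontriviallyNormedField 𝕜]
    [NormedAddCommGroup E] [NormedSpace 𝕜 E] [NormedAddCommGroup F] [NormedSpace 𝕜 F]
    [Fintype ι] {f : E → ι → F} {N : WithTop ℕ∞} {n : ℕ} (hf : ContDiff 𝕜 N f) (hn : n ≤ N)
    (i : ι) (x : E) : ‖iteratedFDeriv 𝕜 n (fun y => f y i) x‖ ≤ ‖iteratedFDeriv 𝕜 n f x‖ := by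
  let π : (ι → F) →L[𝕜] F := ContinuousLinearMap.proj i
  have hπ : ‖π‖ ≤ 1 :=
    ContinuousLinearMap.opNorm_le_bound _ zero_le_one fun v => by
      rw [one_mul]; exact norm_le_pi_norm v i
  calc ‖iteratedFDeriv 𝕜 n (π ∘ f) x‖ ≤ ‖π‖ * ‖iteratedFDeriv 𝕜 n f x‖ :=
        π.norm_iteratedFDeriv_comp_left hf.contDiffAt hn
    _ ≤ ‖iteratedFDeriv 𝕜 n f x‖ := mul_le_of_le_one_left (norm_nonneg _) hπ

variable {g : V3 → ℝ} {f : V3 → V3} {x : V3}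

theorem contDiff_pd {n : ℕ} (hg : ContDiff ℝ (n + 1) g) (j : Fin 3) : ContDiff ℝ n (pd j g) :=
  (hg.fderiv_right le_rfl).clm_apply contDiff_const

theorem pd_mul {a b : V3 → ℝ} (ha : DifferentiableAt ℝ a x) (hb : DifferentiableAt ℝ b x)
    (j : Fin 3) : pd j (fun y => a y * b y) x = pd j a x * b x + a x * pd j b x := by
  simp only [pd, fderiv_fun_mul ha hb, add_apply, smul_apply, smul_eq_mul]
  ring

theorem pd_pow (hg : DifferentiableAt ℝ g x) (n : ℕ) (j : Fin 3) :
    pd j (fun y => g y ^ n) x = n * g x ^ (n - 1) * pd j g x := by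
  simp [pd, fderiv_fun_pow n hg]

theorem norm_iteratedFDeriv_pd_le {n : ℕ} (hg : ContDiff ℝ (n + 1) g) (j : Fin 3) (x : V3) :
    ‖iteratedFDeriv ℝ n (pd j g) x‖ ≤ ‖iteratedFDeriv ℝ (n + 1) g x‖ := by
  have h := norm_iteratedFDeriv_clm_apply_const (c := (Pi.single j 1 : V3))
    (x := x) (hg.fderiv_right le_rfl).contDiffAt (le_refl (n : WithTop ℕ∞))
  rwa [Pi.norm_single, norm_one, one_mul, norm_iteratedFDeriv_fderiv] at h

theorem norm_iteratedFDeriv_pd_apply_le {n : ℕ} (hf : ContDiff ℝ (n + 1) f) (i j : Fin 3)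
    (x : V3) : ‖iteratedFDeriv ℝ n (pd j (fun y => f y i)) x‖ ≤ ‖iteratedFDeriv ℝ (n + 1) f x‖ :=
  (norm_iteratedFDeriv_pd_le (contDiff_pi.1 hf i) j x).trans
    (norm_iteratedFDeriv_apply_le hf le_rfl i x)

theorem abs_pd_apply_le (hf : ContDiff ℝ 1 f) (i j : Fin 3) (x : V3) :
    |pd j (fun y => f y i) x| ≤ ‖fderiv ℝ f x‖ := by
  simpa using norm_iteratedFDeriv_pd_apply_le (n := 0) (by simpa using hf) i j x

theorem abs_pd_pd_le (hg : ContDiff ℝ 2 g) (j k : Fin 3) (x : V3) :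
    |pd k (pd j g) x| ≤ ‖iteratedFDeriv ℝ 2 g x‖ := by
  have hg' : ContDiff ℝ (1 + 1) g := by rwa [one_add_one_eq_two]
  calc |pd k (pd j g) x| ≤ ‖iteratedFDeriv ℝ 1 (pd j g) x‖ := by
        simpa using norm_iteratedFDeriv_pd_le (n := 0) (by simpa using contDiff_pd hg' j) k x
    _ ≤ ‖iteratedFDeriv ℝ 2 g x‖ := by simpa using norm_iteratedFDeriv_pd_le hg' j x

end PartialDerivatives

theorem integral_mul_le_sqrt_mul_sqrt {X : Type*} [MeasurableSpace X] {μ : Measure X}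
    {f g : X → ℝ} (hf : MemLp f 2 μ) (hg : MemLp g 2 μ) :
    ∫ x, f x * g x ∂μ ≤ √(∫ x, f x ^ 2 ∂μ) * √(∫ x, g x ^ 2 ∂μ) := by
  have hholder := integral_mul_norm_le_Lp_mul_Lq (f := f) (g := g) Real.HolderConjugate.two_two
    (by rwa [ENNReal.ofReal_ofNat]) (by rwa [ENNReal.ofReal_ofNat])
  simp only [Real.norm_eq_abs, Real.rpow_two, sq_abs, ← Real.sqrt_eq_rpow] at hholder
  refine le_trans (integral_mono (hf.integrable_mul hg) ?_ fun x => ?_) hholder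
  · exact (hf.integrable_mul hg).abs.congr (Filter.Eventually.of_forall fun x => abs_mul _ _)
  · exact (le_abs_self _).trans (abs_mul _ _).le

theorem sqrt_le_of_le_mul_sqrt {X c : ℝ} (hc : 0 ≤ c) (h : X ≤ c * √X) : √X ≤ c := by
  rcases (Real.sqrt_nonneg X).eq_or_lt with h0 | hpos
  · rw [← h0]; exact hc
  · have hX : 0 ≤ X := (Real.sqrt_pos.1 hpos).le
    exact le_of_mul_le_mul_right (by rwa [Real.mul_self_sqrt hX]) hpos

theorem Fin.insertNth_eq_insertNth_zero_add_single {n : ℕ} {M : Type*} [AddZeroClass M]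
    (α : Fin (n + 1)) (c : M) (y : Fin n → M) :
    Fin.insertNth α c y = Fin.insertNth α 0 y + (Pi.single α c : Fin (n + 1) → M) := by
  funext p
  refine Fin.succAboveCases α ?_ (fun j => ?_) p <;> simp

theorem integral_fderiv_single_eq_zero_of_periodic {n : ℕ} {E : Type*} [NormedAddCommGroup E]
    [NormedSpace ℝ E] [CompleteSpace E] {L : ℝ} (hL : 0 ≤ L) {ψ : (Fin (n + 1) → ℝ) → E}
    (hψ : ContDiff ℝ 1 ψ) {α : Fin (n + 1)} (hper : Periodic ψ (Pi.single α L)) :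
    ∫ x in Icc 0 (fun _ => L), fderiv ℝ ψ x (Pi.single α 1) = 0 := by
  -- divergence theorem for the vector field `ψ e_α`
  have hsum : ∀ x, ∑ i, Pi.single (M := fun _ => _ → _) α (fderiv ℝ ψ) i x (Pi.single i 1) =
      fderiv ℝ ψ x (Pi.single α 1) := fun x => by
    rw [Finset.sum_eq_single α (fun i _ hi => by simp [hi]) (by simp)]
    simp
  have hdiv := integral_divergence_of_hasFDerivAt_off_countable' 0 (fun _ => L) (fun _ => hL)
    (Pi.single (M := fun _ => _ → _) α ψ) (Pi.single (M := fun _ => _ → _) α (fderiv ℝ ψ)) ∅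
    countable_empty
    (fun i => by
      rcases eq_or_ne i α with rfl | hi
      · simpa using hψ.continuous.continuousOn
      · rw [Pi.single_eq_of_ne hi]; exact continuousOn_const)
    (fun x _ i => by
      rcases eq_or_ne i α with rfl | hi
      · simpa using (hψ.differentiable one_ne_zero x).hasFDerivAt
      · rw [Pi.single_eq_of_ne hi, Pi.single_eq_of_ne hi]; exact hasFDerivAt_const 0 x)
    (by
      simp_rw [hsum]
      exact (hψ.continuous_fderiv one_ne_zero).clm_apply continuous_const
        |>.continuousOn.integrableOn_compact isCompact_Icc)
  simp_rw [hsum] at hdiv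
  -- the two faces orthogonal to `e_α` are translates of each other by `L e_α`
  rw [hdiv]
  refine Finset.sum_eq_zero fun i _ => ?_
  rcases eq_or_ne i α with rfl | hi
  · simp [Fin.insertNth_eq_insertNth_zero_add_single i L, hper _]
  · simp [hi]

section Torus

variable {L : ℝ} {α : Fin 3}

theorem isCompact_Q3 (L : ℝ) : IsCompact (Q3 L) :=
  isCompact_univ_pi fun _ => isCompact_Icc

theorem Continuous.integrableOn_Q3 {f : V3 → ℝ} (hf : Continuous f) (L : ℝ) :
    IntegrableOn f (Q3 L) :=
  hf.continuousOn.integrableOn_compact (isCompact_Q3 L)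

theorem Continuous.memLp_two_Q3 {f : V3 → ℝ} (hf : Continuous f) (L : ℝ) :
    MemLp f 2 (volume.restrict (Q3 L)) :=
  (memLp_two_iff_integrable_sq hf.aestronglyMeasurable).2 ((hf.pow 2).integrableOn_Q3 L)

theorem continuous_pd {g : V3 → ℝ} (hg : ContDiff ℝ 1 g) (j : Fin 3) : Continuous (pd j g) :=
  (hg.continuous_fderiv one_ne_zero).clm_apply continuous_const

theorem setIntegral_Q3_pd_eq_zero (hL : 0 ≤ L) {ψ : V3 → ℝ} (hψ : ContDiff ℝ 1 ψ)
    (hper : Periodic ψ (Pi.single α L)) : ∫ x in Q3 L, pd α ψ x = 0 := by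
  rw [Q3, pi_univ_Icc]
  exact integral_fderiv_single_eq_zero_of_periodic hL hψ hper

theorem setIntegral_Q3_mul_pd (hL : 0 ≤ L) {a b : V3 → ℝ} (ha : ContDiff ℝ 1 a)
    (hb : ContDiff ℝ 1 b) (hpa : Periodic a (Pi.single α L)) (hpb : Periodic b (Pi.single α L)) :
    ∫ x in Q3 L, a x * pd α b x = -∫ x in Q3 L, pd α a x * b x := by
  have h := setIntegral_Q3_pd_eq_zero hL (ha.mul hb) (hpa.mul hpb)
  simp_rw [pd_mul (ha.differentiable one_ne_zero _) (hb.differentiable one_ne_zero _)] at h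
  rw [integral_add (f := fun x => pd α a x * b x) (g := fun x => a x * pd α b x)
    (((continuous_pd ha α).mul hb.continuous).integrableOn_Q3 L)
    ((ha.continuous.mul (continuous_pd hb α)).integrableOn_Q3 L)] at h
  linarith

theorem sqrt_setIntegral_pd_pow_four_le (hL : 0 ≤ L) {F : V3 → ℝ} (hF : ContDiff ℝ 2 F)
    (hper : Periodic F (Pi.single α L)) {M : ℝ} (hM : ∀ x ∈ Q3 L, |F x| ≤ M) :
    √(∫ x in Q3 L, pd α F x ^ 4) ≤ 3 * M * √(∫ x in Q3 L, pd α (pd α F) x ^ 2) := by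
  set f := pd α F
  have hf : ContDiff ℝ 1 f := contDiff_pd (by rwa [Nat.cast_one, one_add_one_eq_two]) α
  have hf' : Continuous (pd α f) := continuous_pd hf α
  have hM0 : 0 ≤ M := (abs_nonneg _).trans (hM 0 fun _ _ => ⟨le_rfl, hL⟩)
  set X := ∫ x in Q3 L, f x ^ 4
  have hibp : X = -∫ x in Q3 L, 3 * f x ^ 2 * pd α f x * F x := by
    calc X = ∫ x in Q3 L, f x ^ 3 * f x := by simp_rw [X, ← pow_succ]
      _ = -∫ x in Q3 L, pd α (fun y => f y ^ 3) x * F x :=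
        setIntegral_Q3_mul_pd hL (hf.pow 3) (hF.of_le one_le_two)
          (fun x => by simp only [f, periodic_pd hper α x]) hper
      _ = -∫ x in Q3 L, 3 * f x ^ 2 * pd α f x * F x := by
        simp_rw [pd_pow (hf.differentiable one_ne_zero _)]; norm_num
  have hbound : X ≤ 3 * M * ∫ x in Q3 L, f x ^ 2 * |pd α f x| := by
    rw [hibp, ← integral_neg, ← integral_const_mul]
    refine setIntegral_mono_on ?_ ?_ (isCompact_Q3 L).isClosed.measurableSet fun x hx => ?_
    · exact ((((continuous_const.mul (hf.continuous.pow 2)).mul hf').mul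
        hF.continuous).neg).integrableOn_Q3 L
    · exact (continuous_const.mul ((hf.continuous.pow 2).mul hf'.abs)).integrableOn_Q3 L
    · calc -(3 * f x ^ 2 * pd α f x * F x) ≤ |3 * f x ^ 2 * pd α f x * F x| := neg_le_abs _
        _ = 3 * (f x ^ 2 * |pd α f x|) * |F x| := by
          rw [abs_mul, abs_mul, abs_mul, abs_pow, sq_abs, abs_of_pos three_pos]; ring
        _ ≤ 3 * (f x ^ 2 * |pd α f x|) * M := by gcongr; exact hM x hx
        _ = 3 * M * (f x ^ 2 * |pd α f x|) := by ring
  have hcs := integral_mul_le_sqrt_mul_sqrt (f := fun x => f x ^ 2) (g := fun x => |pd α f x|)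
    ((hf.continuous.pow 2).memLp_two_Q3 L)
    (hf'.abs.memLp_two_Q3 L)
  simp only [sq_abs, ← pow_mul, Nat.reduceMul] at hcs
  have hX' : X ≤ 3 * M * √(∫ x in Q3 L, pd α f x ^ 2) * √X := by
    calc X ≤ 3 * M * (√X * √(∫ x in Q3 L, pd α f x ^ 2)) :=
          hbound.trans (mul_le_mul_of_nonneg_left hcs (by positivity))
      _ = 3 * M * √(∫ x in Q3 L, pd α f x ^ 2) * √X := by ring
  exact sqrt_le_of_le_mul_sqrt (by positivity) hX'

end Torus

section Estimates

variable {L : ℝ}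

theorem Periodic3.periodic {f : V3 → V3} (h : Periodic3 L f) (i : Fin 3) :
    Periodic f (Pi.single i L) := fun x => h x i

theorem abs_apply_le_supN (hL : 0 < L) {f : V3 → V3} (hf : Continuous f) (hper : Periodic3 L f)
    (i : Fin 3) (x : V3) : |f x i| ≤ supN f :=
  (norm_le_pi_norm (f x) i).trans (le_ciSup (bddAbove_range_norm_of_periodic hL hf hper.periodic) x)

theorem abs_pd_apply_le_gradSup (hL : 0 < L) {f : V3 → V3} (hf : ContDiff ℝ 1 f)
    (hper : Periodic3 L f) (i j : Fin 3) (x : V3) : |pd j (fun y => f y i) x| ≤ gradSup f :=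
  (abs_pd_apply_le hf i j x).trans (le_ciSup (bddAbove_range_norm_of_periodic hL
    (hf.continuous_fderiv one_ne_zero) fun k => (hper.periodic k).fderiv) x)

theorem sqrt_setIntegral_sq_le {h G : V3 → ℝ} (hh : Continuous h) (hG : Continuous G)
    (hle : ∀ x, h x ^ 2 ≤ G x) : √(∫ x in Q3 L, h x ^ 2) ≤ √(∫ x in Q3 L, G x) :=
  Real.sqrt_le_sqrt (setIntegral_mono ((hh.pow 2).integrableOn_Q3 L) (hG.integrableOn_Q3 L) hle)

theorem sqrt_setIntegral_sq_le_w22N {ω : V3 → V3} (hω : ContDiff ℝ 2 ω) {h : V3 → ℝ}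
    (hh : Continuous h) (hbound : ∀ x, |h x| ≤ ‖iteratedFDeriv ℝ 2 ω x‖) :
    √(∫ x in Q3 L, h x ^ 2) ≤ w22N L ω := by
  refine sqrt_setIntegral_sq_le hh (((hω.continuous.norm.pow 2).add
    ((hω.continuous_fderiv two_ne_zero).norm.pow 2)).add
    ((hω.continuous_iteratedFDeriv le_rfl).norm.pow 2)) fun x => ?_
  have := sq_le_sq.2 ((hbound x).trans (le_abs_self _))
  linarith [sq_nonneg ‖ω x‖, sq_nonneg ‖fderiv ℝ ω x‖]

theorem sqrt_setIntegral_sq_le_gw22N {u : V3 → V3} (hu : ContDiff ℝ 3 u) {h : V3 → ℝ}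
    (hh : Continuous h) (hbound : ∀ x, |h x| ≤ ‖iteratedFDeriv ℝ 3 u x‖) :
    √(∫ x in Q3 L, h x ^ 2) ≤ gw22N L u := by
  refine sqrt_setIntegral_sq_le hh ((((hu.continuous_fderiv (by norm_num)).norm.pow 2).add
    ((hu.continuous_iteratedFDeriv (by norm_num)).norm.pow 2)).add
    ((hu.continuous_iteratedFDeriv le_rfl).norm.pow 2)) fun x => ?_
  have := sq_le_sq.2 ((hbound x).trans (le_abs_self _))
  linarith [sq_nonneg ‖fderiv ℝ u x‖, sq_nonneg ‖iteratedFDeriv ℝ 2 u x‖]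

theorem sqrt_setIntegral_pd_apply_pow_four_le (hL : 0 < L) {ω : V3 → V3} (hω : ContDiff ℝ 2 ω)
    (hper : Periodic3 L ω) (α i : Fin 3) :
    √(∫ x in Q3 L, pd α (fun y => ω y i) x ^ 4) ≤ 3 * supN ω * w22N L ω := by
  have hωi : ContDiff ℝ 2 (fun y => ω y i) := contDiff_pi.1 hω i
  refine (sqrt_setIntegral_pd_pow_four_le hL.le hωi ((hper.periodic α).comp (· i))
    fun x _ => abs_apply_le_supN hL hω.continuous hper i x).trans ?_
  refine mul_le_mul_of_nonneg_left (sqrt_setIntegral_sq_le_w22N hω ?_ fun x => ?_)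
    (mul_nonneg zero_le_three (Real.iSup_nonneg fun _ => norm_nonneg _))
  · exact continuous_pd (contDiff_pd (n := 1) (by rwa [Nat.cast_one, one_add_one_eq_two]) α) α
  · exact (abs_pd_pd_le hωi α α x).trans (norm_iteratedFDeriv_apply_le hω le_rfl i x)

theorem sqrt_setIntegral_pd_pd_apply_pow_four_le (hL : 0 < L) {u : V3 → V3}
    (hu : ContDiff ℝ 3 u) (hper : Periodic3 L u) (β γ j : Fin 3) :
    √(∫ x in Q3 L, pd β (pd γ (fun y => u y j)) x ^ 4) ≤ 3 * gradSup u * gw22N L u := by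
  have hu' : ContDiff ℝ ((2 : ℕ) + 1) u := by exact_mod_cast hu
  have hG : ContDiff ℝ 2 (pd γ fun y => u y j) := contDiff_pd (contDiff_pi.1 hu' j) γ
  refine (sqrt_setIntegral_pd_pow_four_le hL.le hG
    (periodic_pd ((hper.periodic β).comp (· j)) γ)
    fun x _ => abs_pd_apply_le_gradSup hL (hu.of_le (by norm_num)) hper j γ x).trans ?_
  refine mul_le_mul_of_nonneg_left (sqrt_setIntegral_sq_le_gw22N hu ?_ fun x => ?_)
    (mul_nonneg zero_le_three (Real.iSup_nonneg fun _ => norm_nonneg _))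
  · exact continuous_pd (contDiff_pd (n := 1) (by rwa [Nat.cast_one, one_add_one_eq_two]) β) β
  · exact (abs_pd_pd_le hG β β x).trans (norm_iteratedFDeriv_pd_apply_le hu' j γ x)

theorem sqrt_setIntegral_mul_sq_le {f g : V3 → ℝ} (hf : Continuous f) (hg : Continuous g)
    {a b : ℝ} (hfa : √(∫ x in Q3 L, f x ^ 4) ≤ a) (hgb : √(∫ x in Q3 L, g x ^ 4) ≤ b) :
    √(∫ x in Q3 L, (f x * g x) ^ 2) ≤ √(a * b) := by
  have hcs := integral_mul_le_sqrt_mul_sqrt (f := fun x => f x ^ 2) (g := fun x => g x ^ 2)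
    ((hf.pow 2).memLp_two_Q3 L) ((hg.pow 2).memLp_two_Q3 L)
  simp only [← pow_mul, ← mul_pow] at hcs
  exact Real.sqrt_le_sqrt (hcs.trans (mul_le_mul hfa hgb (Real.sqrt_nonneg _)
    ((Real.sqrt_nonneg _).trans hfa)))

theorem sqrt_mul_mul_le {a b c w : ℝ} (ha : 0 ≤ a) (hb : 0 ≤ b) (hw : 0 ≤ w) :
    √(a * w * (b * (c * w))) ≤ √c * (a + b) * w := by
  rw [show a * w * (b * (c * w)) = c * (a * b * w ^ 2) by ring, Real.sqrt_mul' c (by positivity),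
    mul_assoc √c]
  refine mul_le_mul_of_nonneg_left (Real.sqrt_le_iff.2 ⟨by positivity, ?_⟩) (Real.sqrt_nonneg c)
  have : a * b ≤ (a + b) ^ 2 := by nlinarith
  calc a * b * w ^ 2 ≤ (a + b) ^ 2 * w ^ 2 := by gcongr
    _ = ((a + b) * w) ^ 2 := by ring

end Estimates

theorem product_estimate_general (L : ℝ) (hL : 0 < L) (C₀ : ℝ) :
    ∃ C : ℝ, ∀ u ω : V3 → V3,
      ContDiff ℝ 3 u → DivFree u → Periodic3 L u →
      ContDiff ℝ 2 ω → Periodic3 L ω →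
      gw22N L u ≤ C₀ * w22N L ω →
      ∀ (α β γ i j : Fin 3),
        Real.sqrt (∫ x in Q3 L,
            (pd α (fun y => ω y i) x * pd β (pd γ (fun y => u y j)) x) ^ 2)
          ≤ C * (gradSup u + supN ω) * w22N L ω := by
  refine ⟨3 * √C₀, fun u ω hu _ hu_per hω hω_per hgw α β γ i j => ?_⟩
  have hS : 0 ≤ supN ω := Real.iSup_nonneg fun _ => norm_nonneg _
  have hG : 0 ≤ gradSup u := Real.iSup_nonneg fun _ => norm_nonneg _
  have hW : 0 ≤ w22N L ω := Real.sqrt_nonneg _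
  have hg := (sqrt_setIntegral_pd_pd_apply_pow_four_le hL hu hu_per β γ j).trans
    (mul_le_mul_of_nonneg_left hgw (by positivity))
  calc _ ≤ √(3 * supN ω * w22N L ω * (3 * gradSup u * (C₀ * w22N L ω))) :=
        sqrt_setIntegral_mul_sq_le (continuous_pd ((contDiff_pi.1 hω i).of_le one_le_two) α)
          (continuous_pd (contDiff_pd (n := 1) ((contDiff_pi.1 hu j).of_le (by norm_num)) γ) β)
          (sqrt_setIntegral_pd_apply_pow_four_le hL hω hω_per α i) hg
    _ ≤ √C₀ * (3 * supN ω + 3 * gradSup u) * w22N L ω :=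
        sqrt_mul_mul_le (mul_nonneg zero_le_three hS) (mul_nonneg zero_le_three hG) hW
    _ = 3 * √C₀ * (gradSup u + supN ω) * w22N L ω := by ring

/-- Product estimate from interpolation: for divergence-free `u ∈ W^{3,2}` with
`‖∇u‖_{W^{2,2}} ≤ C₀‖ω‖_{W^{2,2}}` and `ω ∈ W^{2,2} ∩ L^∞`,
`‖∂_α ω · ∂_β∂_γ u‖_{L²} ≤ C (‖∇u‖_∞ + ‖ω‖_∞) ‖ω‖_{W^{2,2}}` for all indices `α, β, γ`. -/
theorem product_estimate (L : ℝ) (hL : 0 < L) (C₀ : ℝ) (hC₀ : 0 < C₀) :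
    ∃ C : ℝ, ∀ u ω : V3 → V3,
      ContDiff ℝ 3 u → DivFree u → Periodic3 L u →
      ContDiff ℝ 2 ω → Periodic3 L ω →
      gw22N L u ≤ C₀ * w22N L ω →
      ∀ (α β γ i j : Fin 3),
        Real.sqrt (∫ x in Q3 L,
            (pd α (fun y => ω y i) x * pd β (pd γ (fun y => u y j)) x) ^ 2)
          ≤ C * (gradSup u + supN ω) * w22N L ω :=
  product_estimate_general L hL C₀
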